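/- arXiv:1208.6091 — 4 statements merged into one kernel-verified Lean document; each statement's English description precedes it below -/
import Mathlib

section
/- If the continuum hypothesis holds (2^{\aleph_0} = \aleph_1), then there exists a coloring c : \omega_1 \times \omega \to 2 such that for no sets A \subseteq \omega_1 of cardinality \aleph_1 and B \subseteq \omega infinite is c constant on A \times B. -/
/-!
Under CH, enumerate the subsets of `ℕ` in order type `ω₁`, so that each `α < ω₁` sees only
countably many of them. A countable family of infinite subsets of `ℕ` can be split by a
single 2-coloring, obtained by picking two fresh points of each set in turn; let `c(α, ·)`
split every infinite set enumerated at or before `α`. If `A × B` were monochromatic with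
`A` uncountable, some `α ∈ A` would lie above the index of `B`, and `c(α, ·)` splits `B`.
-/

open Cardinal Set

theorem exists_coloring_nonconstant_on_seq (S : ℕ → Set ℕ) (hS : ∀ i, (S i).Infinite) :
    ∃ f : ℕ → Fin 2, ∀ i k, ∃ x ∈ S i, f x ≠ k := by
  choose g hgS hlt using fun i n => (hS i).exists_gt n
  -- `s (2 * i)` and `s (2 * i + 1)` are two points of `S i`.
  obtain ⟨s, hs0, hsucc⟩ : ∃ s : ℕ → ℕ, s 0 = g 0 0 ∧ ∀ n, s (n + 1) = g ((n + 1) / 2) (s n) :=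
    ⟨fun n => Nat.rec (g 0 0) (fun n m => g ((n + 1) / 2) m) n, rfl, fun _ => rfl⟩
  have hsS : ∀ n, s n ∈ S (n / 2) := by
    rintro (_ | n)
    · exact hs0 ▸ hgS 0 0
    · exact hsucc n ▸ hgS _ _
  have hs : StrictMono s := strictMono_nat_of_lt_succ fun n => hsucc n ▸ hlt _ _
  classical
  refine ⟨fun x => if ∃ j, s (2 * j + 1) = x then 1 else 0, fun i k => ?_⟩
  fin_cases k
  · refine ⟨s (2 * i + 1), by simpa [Nat.add_div_of_dvd_right] using hsS (2 * i + 1), ?_⟩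
    simp
  · refine ⟨s (2 * i), by simpa using hsS (2 * i), ?_⟩
    have : ∀ j, s (2 * j + 1) ≠ s (2 * i) := fun j h => by
      have := hs.injective h
      omega
    simp [this]

theorem exists_coloring_nonconstant_on_countable {𝒮 : Set (Set ℕ)} (h𝒮 : 𝒮.Countable)
    (hinf : ∀ B ∈ 𝒮, B.Infinite) : ∃ f : ℕ → Fin 2, ∀ B ∈ 𝒮, ∀ k, ∃ x ∈ B, f x ≠ k := by
  obtain ⟨S, hS⟩ := (h𝒮.union (countable_singleton Set.univ)).exists_eq_range
    ⟨Set.univ, Or.inr rfl⟩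
  have hSinf : ∀ i, (S i).Infinite := fun i => by
    obtain hB | hB := (hS ▸ mem_range_self i : S i ∈ 𝒮 ∪ {Set.univ})
    exacts [hinf _ hB, (mem_singleton_iff.mp hB) ▸ infinite_univ]
  obtain ⟨f, hf⟩ := exists_coloring_nonconstant_on_seq S hSinf
  refine ⟨f, fun B hB => ?_⟩
  obtain ⟨i, rfl⟩ : B ∈ range S := hS ▸ Or.inl hB
  exact hf i

theorem exists_linearOrder_countable_Iic {X : Type*} (hX : #X = ℵ₁) :
    ∃ _ : LinearOrder X, ∀ x : X, (Iic x).Countable := by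
  obtain ⟨_, _, hord⟩ := exists_ord_eq_type_lt X
  refine ⟨inferInstance, fun x => ?_⟩
  rw [← Iio_insert, countable_insert, ← le_aleph0_iff_set_countable, ← lt_aleph_one_iff, ← hX]
  exact mk_Iio_lt x hord

theorem mk_set_nat_eq_aleph_one (hCH : (2 : Cardinal.{u}) ^ ℵ₀ = ℵ₁) : #(Set ℕ) = ℵ₁ := by
  apply lift_injective.{u}
  rw [mk_set_nat, lift_continuum, ← two_power_aleph0, hCH, lift_aleph, Ordinal.lift_one]

/-- Erdős–Hajnal–Rado: if CH holds then the strong polarized relation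
    `(ω₁, ω) → (ω₁, ω)` fails. -/
theorem stmt_0 (CH : (2 : Cardinal) ^ aleph 0 = aleph 1)
    (X : Type) (hX : #X = aleph 1) :
    ∃ c : X → ℕ → Fin 2,
      ¬ ∃ (A : Set X) (B : Set ℕ), #A = aleph 1 ∧ B.Infinite ∧
        ∃ i : Fin 2, ∀ a ∈ A, ∀ b ∈ B, c a b = i := by
  obtain ⟨e⟩ : Nonempty (X ≃ Set ℕ) :=
    Cardinal.eq.mp (hX.trans (mk_set_nat_eq_aleph_one (aleph_zero ▸ CH)).symm)
  obtain ⟨_, hIic⟩ := exists_linearOrder_countable_Iic hX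
  have h𝒮 : ∀ a, (e '' Iic a ∩ {B | B.Infinite}).Countable := fun a =>
    ((hIic a).image e).mono inter_subset_left
  choose c hc using fun a => exists_coloring_nonconstant_on_countable (h𝒮 a) fun _ hB => hB.2
  refine ⟨c, ?_⟩
  rintro ⟨A, B, hA, hB, i, hAB⟩
  obtain ⟨a, haA, ha⟩ : ∃ a ∈ A, e.symm B ≤ a := by
    by_contra! h
    have hAc : A.Countable := (hIic (e.symm B)).mono fun a ha => (h a ha).le
    exact aleph0_lt_aleph_one.not_ge (hA ▸ le_aleph0_iff_set_countable.mpr hAc)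
  obtain ⟨b, hb, hbi⟩ := hc a B ⟨⟨e.symm B, ha, e.apply_symm_apply B⟩, hB⟩ i
  exact hbi (hAB a haA b hb)
end

section
/- If \kappa is an infinite cardinal and 2^\kappa = \kappa^+, then there is a coloring c : \kappa^+ \times \kappa \to 2 such that for no A \subseteq \kappa^+ with |A| = \kappa^+ and B \subseteq \kappa with |B| = \kappa is c constant on A \times B. -/
open Cardinal

/-- System of distinct representatives for at most `κ` sets of size `≥ κ`. -/
lemma ehr_sdr {Y ι : Type} {κ : Cardinal} (hκ : ℵ₀ ≤ κ) (hι : #ι ≤ κ)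
    (B : ι → Set Y) (hB : ∀ i, κ ≤ #(B i)) :
    ∃ g : ι → Y, Function.Injective g ∧ ∀ i, g i ∈ B i := by
  classical
  by_cases hempty : IsEmpty ι
  · exact ⟨fun i => hempty.elim i, fun i => hempty.elim i, fun i => hempty.elim i⟩
  rw [not_isEmpty_iff] at hempty
  have hYne : Nonempty Y := by
    obtain ⟨i⟩ := hempty
    have hne : Nonempty (B i) := by
      rw [← Cardinal.mk_ne_zero_iff]
      exact (aleph0_pos.trans_le (hκ.trans (hB i))).ne'
    exact ⟨hne.some.1⟩
  haveI : Inhabited Y := Classical.inhabited_of_nonempty hYne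
  obtain ⟨emb⟩ : Nonempty (ι ↪ κ.ord.ToType) := by
    rw [← Cardinal.le_def, Cardinal.mk_toType, Cardinal.card_ord]
    exact hι
  set r : ι → ι → Prop := fun a b => emb a < emb b with hr
  have hwf : WellFounded r := InvImage.wf emb (wellFounded_lt)
  have hsmall : ∀ i : ι, #{j : ι | r j i} < κ := by
    intro i
    have h1 : #{j : ι | r j i} ≤ #{y : κ.ord.ToType | y < emb i} := by
      rw [← Cardinal.mk_image_eq (f := emb) (s := {j : ι | r j i}) emb.injective]
      apply Cardinal.mk_le_mk_of_subset
      rintro y ⟨j, hj, rfl⟩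
      exact hj
    have h2 : #{y : κ.ord.ToType | y < emb i} < κ :=
      Cardinal.lt_ord.mp (Ordinal.typein_lt_self (emb i))
    exact h1.trans_lt h2
  set F : ∀ i : ι, (∀ j, r j i → Y) → Y := fun i f =>
    if h : (B i \ {y | ∃ j, ∃ hj : r j i, f j hj = y}).Nonempty then h.some else default
    with hF
  set g : ι → Y := hwf.fix F with hg
  have hfix : ∀ i, g i = F i (fun j _ => g j) := fun i => hwf.fix_eq F i
  have key : ∀ i, g i ∈ B i \ {y | ∃ j, ∃ _ : r j i, g j = y} := by
    intro i
    have hne : (B i \ {y | ∃ j, ∃ _ : r j i, g j = y}).Nonempty := by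
      by_contra hcon
      rw [Set.not_nonempty_iff_eq_empty, Set.diff_eq_empty] at hcon
      have h1 : {y | ∃ j, ∃ _ : r j i, g j = y} = g '' {j | r j i} := by
        ext y
        constructor
        · rintro ⟨j, hj, rfl⟩; exact ⟨j, hj, rfl⟩
        · rintro ⟨j, hj, rfl⟩; exact ⟨j, hj, rfl⟩
      have h2 : #(B i) ≤ #{y | ∃ j, ∃ _ : r j i, g j = y} := Cardinal.mk_le_mk_of_subset hcon
      rw [h1] at h2
      have h3 : #(g '' {j : ι | r j i}) ≤ #{j : ι | r j i} := Cardinal.mk_image_le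
      exact absurd ((hB i).trans (h2.trans h3)) (not_le.mpr (hsmall i))
    have hgi : g i = if h : (B i \ {y | ∃ j, ∃ _ : r j i, g j = y}).Nonempty
        then h.some else default := hfix i
    rw [hgi, dif_pos hne]
    exact hne.some_mem
  refine ⟨g, ?_, fun i => (key i).1⟩
  intro a b hab
  rcases lt_trichotomy (emb a) (emb b) with hlt | heq | hgt
  · exact absurd ⟨a, hlt, hab⟩ ((key b).2)
  · exact emb.injective heq
  · exact absurd ⟨b, hgt, hab.symm⟩ ((key a).2)

/-- A single 2-coloring of `Y` splitting each member of a family of `≤ κ` sets of size `κ`. -/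
lemma ehr_split {Y ι : Type} {κ : Cardinal} (hκ : ℵ₀ ≤ κ) (hι : #ι ≤ κ)
    (B : ι → Set Y) (hB : ∀ i, κ ≤ #(B i)) :
    ∃ f : Y → Fin 2, ∀ i, (∃ y ∈ B i, f y = 0) ∧ (∃ y ∈ B i, f y = 1) := by
  classical
  have hι2 : #(ι × Fin 2) ≤ κ := by
    rw [Cardinal.mk_prod, Cardinal.lift_id, Cardinal.mk_fin, Cardinal.lift_natCast]
    calc (#ι) * (2 : ℕ) ≤ κ * κ := by
          apply mul_le_mul' hι
          exact le_trans (Cardinal.nat_lt_aleph0 2).le hκ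
      _ = κ := Cardinal.mul_eq_self hκ
  obtain ⟨g, hginj, hgmem⟩ := ehr_sdr hκ hι2 (fun p => B p.1) (fun p => hB p.1)
  refine ⟨fun y => if ∃ i, g (i, 1) = y then 1 else 0, fun i => ⟨⟨g (i, 0), hgmem (i, 0), ?_⟩,
    ⟨g (i, 1), hgmem (i, 1), ?_⟩⟩⟩
  · show (if ∃ j, g (j, 1) = g (i, 0) then (1 : Fin 2) else 0) = 0
    rw [if_neg]
    rintro ⟨j, hj⟩
    have := hginj hj
    simp at this
  · show (if ∃ j, g (j, 1) = g (i, 1) then (1 : Fin 2) else 0) = 1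
    rw [if_pos ⟨i, rfl⟩]

/-- Generalized Erdős–Hajnal–Rado: if `2 ^ κ = κ⁺` then the strong polarized
    relation `(κ⁺, κ) → (κ⁺, κ)` fails. -/
theorem stmt_2 (κ : Cardinal) (hκ : ℵ₀ ≤ κ) (h : (2 : Cardinal) ^ κ = Order.succ κ)
    (X Y : Type) (hX : #X = Order.succ κ) (hY : #Y = κ) :
    ∃ c : X → Y → Fin 2,
      ¬ ∃ (A : Set X) (B : Set Y), #A = Order.succ κ ∧ #B = κ ∧
        ∃ i : Fin 2, ∀ a ∈ A, ∀ b ∈ B, c a b = i := by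
  classical
  set T := (Order.succ κ).ord.ToType with hT
  have hTcard : #T = Order.succ κ := by rw [hT, Cardinal.mk_toType, Cardinal.card_ord]
  obtain ⟨eX⟩ : Nonempty (X ≃ T) := Cardinal.eq.mp (hX.trans hTcard.symm)
  obtain ⟨eS⟩ : Nonempty (T ≃ Set Y) := by
    apply Cardinal.eq.mp
    rw [hTcard, Cardinal.mk_set, hY, h]
  -- small initial segments in T
  have hseg : ∀ t : T, #{s : T | s < t} ≤ κ := by
    intro t
    have := Cardinal.lt_ord.mp (Ordinal.typein_lt_self t)
    exact Order.lt_succ_iff.mp this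
  -- the coloring
  have hf : ∀ α : T, ∃ f : Y → Fin 2,
      ∀ γ : {γ : T // γ < α ∧ κ ≤ #(eS γ)}, (∃ y ∈ eS γ.1, f y = 0) ∧ (∃ y ∈ eS γ.1, f y = 1) := by
    intro α
    apply ehr_split hκ ?_ (fun γ : {γ : T // γ < α ∧ κ ≤ #(eS γ)} => eS γ.1) (fun γ => γ.2.2)
    calc #{γ : T // γ < α ∧ κ ≤ #(eS γ)} ≤ #{γ : T // γ < α} := by
          apply Cardinal.mk_subtype_mono
          exact fun γ hγ => hγ.1
      _ ≤ κ := hseg α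
  choose f hfspec using hf
  refine ⟨fun x y => f (eX x) y, ?_⟩
  rintro ⟨A, B, hA, hB, i, hhom⟩
  -- B is enumerated somewhere
  obtain ⟨γ₀, hγ₀⟩ := eS.surjective B
  -- the image of A in T is unbounded
  have hA' : #(eX '' A) = Order.succ κ := by
    rw [Cardinal.mk_image_eq eX.injective, hA]
  have hub : ∃ α ∈ eX '' A, γ₀ < α := by
    by_contra hcon
    push_neg at hcon
    have hsub : eX '' A ⊆ {s : T | s < γ₀} ∪ {γ₀} := by
      intro s hs
      rcases lt_or_eq_of_le (hcon s hs) with h' | h'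
      · exact Or.inl h'
      · exact Or.inr h'
    have : #(eX '' A) ≤ κ := by
      calc #(eX '' A) ≤ #({s : T | s < γ₀} ∪ {γ₀} : Set T) := Cardinal.mk_le_mk_of_subset hsub
        _ ≤ #{s : T | s < γ₀} + #({γ₀} : Set T) := Cardinal.mk_union_le _ _
        _ ≤ κ + 1 := by
            apply add_le_add (hseg γ₀)
            rw [Cardinal.mk_singleton]
        _ = κ := Cardinal.add_one_eq hκ
    rw [hA'] at this
    exact absurd this (not_le.mpr (Order.lt_succ κ))
  obtain ⟨α, hαA, hγα⟩ := hub
  have hBκ : κ ≤ #(eS γ₀) := by rw [hγ₀, hB]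
  obtain ⟨⟨y0, hy0B, hy00⟩, ⟨y1, hy1B, hy11⟩⟩ := hfspec α ⟨γ₀, hγα, hBκ⟩
  obtain ⟨a, haA, rfl⟩ := hαA
  rw [hγ₀] at hy0B hy1B
  have h0 : f (eX a) y0 = i := hhom a haA y0 hy0B
  have h1 : f (eX a) y1 = i := hhom a haA y1 hy1B
  rw [hy00] at h0
  rw [hy11] at h1
  rw [← h0] at h1
  exact absurd h1 (by decide)
end

section
/- Suppose \mu > cf(\mu) = \kappa and for each cardinal \tau < \mu there exists a \tau^+-complete uniform ultrafilter on \mu^+ (e.g., \mu is a limit of compact cardinals and \mu is strong limit). Then for every \beta < \mu and every coloring c : \mu^+ \times \mu \to 2 there exist A \subseteq \mu^+ with |A| = \mu^+ and B \subseteq \mu with |B| \geq |\beta| such that c is constant on A \times B. -/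
/-!
Fix a set `Y₀ ⊆ Y` of size `β + β < μ`. Since `μ` is a strong limit, `2 ^ (β + β) < μ`, so there
is a uniform ultrafilter `U` on `X` closed under intersections of `2 ^ (β + β)` many sets. The map
sending `a ∈ X` to the colouring `c a` restricted to `Y₀` takes at most `2 ^ (β + β)` values, so one
of its fibres `A` lies in `U`, hence has size `μ⁺`. All rows in `A` agree on `Y₀`, and one of the
two colour classes of that common row has size at least `β`.
-/

open Cardinal

theorem Cardinal.exists_le_mk_preimage_singleton_of_add_le {α : Type*} (f : α → Fin 2)
    {β : Cardinal} (h : β + β ≤ #α) : ∃ i, β ≤ #(f ⁻¹' {i}) := by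
  by_contra! hlt
  have hcover : f ⁻¹' {0} ∪ f ⁻¹' {1} = Set.univ := by
    ext a
    simp only [Set.mem_union, Set.mem_preimage, Set.mem_singleton_iff, Set.mem_univ, iff_true]
    omega
  have hle : #α ≤ #(f ⁻¹' {0}) + #(f ⁻¹' {1}) := by
    rw [← mk_univ, ← hcover]
    exact mk_union_le _ _
  exact (h.trans hle).not_gt (Cardinal.add_lt_add (hlt 0) (hlt 1))

theorem Ultrafilter.exists_preimage_singleton_mem {X Z : Type} (U : Ultrafilter X)
    {τ : Cardinal}
    (hU : ∀ (J : Type) (f : J → Set X), #J ≤ τ → (∀ j, f j ∈ U) → (⋂ j, f j) ∈ U)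
    (g : X → Z) (hZ : #Z ≤ τ) : ∃ z, g ⁻¹' {z} ∈ U := by
  by_contra! hnot
  have hempty : (⋂ z, (g ⁻¹' {z})ᶜ) = ∅ :=
    Set.eq_empty_of_forall_notMem fun a ha => Set.mem_iInter.mp ha (g a) rfl
  simpa [hempty] using hU Z _ hZ fun z => Ultrafilter.compl_mem_iff_notMem.mpr (hnot z)

theorem stmt_8_general (μ : Cardinal)
    (hsl : μ.IsStrongLimit)
    (X Y : Type) (hX : #X = Order.succ μ) (hY : #Y = μ)
    (hult : ∀ τ : Cardinal, τ < μ → ∃ U : Ultrafilter X,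
      (∀ s ∈ U, #s = #X) ∧
      (∀ (J : Type) (f : J → Set X), #J ≤ τ → (∀ j, f j ∈ U) → (⋂ j, f j) ∈ U)) :
    ∀ β : Cardinal, β < μ → ∀ c : X → Y → Fin 2,
      ∃ (A : Set X) (B : Set Y), #A = Order.succ μ ∧ β ≤ #B ∧
        ∃ i : Fin 2, ∀ a ∈ A, ∀ b ∈ B, c a b = i := by
  intro β hβ c
  have hββ : β + β < μ := add_lt_of_lt hsl.aleph0_le hβ hβ
  obtain ⟨Y₀, hY₀⟩ := le_mk_iff_exists_set.mp (hY ▸ hββ.le)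
  obtain ⟨U, hUuniform, hUcomplete⟩ := hult _ (hsl.isStrongPrelimit hββ)
  have hrows : #(Y₀ → Fin 2) ≤ 2 ^ (β + β) := by simp [hY₀]
  obtain ⟨row, hrow⟩ := U.exists_preimage_singleton_mem hUcomplete
    (fun a (y : Y₀) => c a y) hrows
  obtain ⟨i, hi⟩ := exists_le_mk_preimage_singleton_of_add_le row hY₀.ge
  refine ⟨_, Subtype.val '' (row ⁻¹' {i}), hX ▸ hUuniform _ hrow, ?_, i, ?_⟩
  · rwa [mk_image_eq Subtype.val_injective]
  · rintro a ha _ ⟨y, hy, rfl⟩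
    exact (congr_fun ha y).trans hy

/-- Polarized relation for a limit of compact cardinals: if `μ` is singular of
    cofinality `κ`, `μ` is a strong limit, and for every `τ < μ` there is a
    `τ⁺`-complete uniform ultrafilter on `μ⁺`, then for every `β < μ` and every
    2-coloring of `μ⁺ × μ` there is a monochromatic rectangle `A × B` with
    `|A| = μ⁺` and `|B| ≥ β`. -/
theorem stmt_8 (μ κ : Cardinal) (hκ : κ = μ.ord.cof) (hsing : κ < μ)
    (hsl : μ.IsStrongLimit)
    (X Y : Type) (hX : #X = Order.succ μ) (hY : #Y = μ)
    (hult : ∀ τ : Cardinal, τ < μ → ∃ U : Ultrafilter X,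
      (∀ s ∈ U, #s = #X) ∧
      (∀ (J : Type) (f : J → Set X), #J ≤ τ → (∀ j, f j ∈ U) → (⋂ j, f j) ∈ U)) :
    ∀ β : Cardinal, β < μ → ∀ c : X → Y → Fin 2,
      ∃ (A : Set X) (B : Set Y), #A = Order.succ μ ∧ β ≤ #B ∧
        ∃ i : Fin 2, ∀ a ∈ A, ∀ b ∈ B, c a b = i :=
  stmt_8_general μ hsl X Y hX hY hult
end

section
/- Suppose \mu is singular of cofinality \kappa, \theta < \kappa, and the strong polarized relation \binom{\mu^+}{\mu} \to \binom{\mu^+}{\mu}^{1,1}_\theta holds. Then 2^\mu > \mu^+. -/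
/-!
Assume `2 ^ μ = μ⁺` with `μ` infinite, and list the subsets of `μ` as `(B_x)_{x < μ⁺}`. For each
`x < μ⁺` the at most `μ` sets `B_z` (`z < x`) of size `μ` can be split simultaneously by one
`f_x : μ → 2` (a Bernstein-type diagonalisation of length `μ`). The colouring `c(x, y) = f_x(y)`
has no homogeneous `A × B` with `|A| = μ⁺`, `|B| = μ`: writing `B = B_z`, some `a ∈ A` lies above
`z`, and `f_a` splits `B`. Composing with two distinct colours gives a `θ`-colouring for any
`θ ≥ 2`; and `μ` is infinite because its cofinality exceeds `θ ≥ 2`.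
-/

open Cardinal Set

universe u

theorem WellFoundedLT.exists_forall_restrict {J : Type*} {α : Sort*} [Preorder J] [WellFoundedLT J]
    (P : ∀ j : J, (Iio j → α) → α → Prop) (h : ∀ j g, ∃ a, P j g a) :
    ∃ p : J → α, ∀ j, P j (fun k => p k) (p j) := by
  let p : J → α := WellFoundedLT.fix fun j rec => (h j fun k => rec k.1 k.2).choose
  refine ⟨p, fun j => ?_⟩
  have hpj : p j = (h j fun k => p k).choose := WellFoundedLT.fix_eq _ j
  exact hpj ▸ (h j _).choose_spec

theorem Cardinal.nontrivial_diff_of_mk_lt {Y : Type u} {S U : Set Y} (hS : ℵ₀ ≤ #S)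
    (hU : #U < #S) : (S \ U).Nontrivial := by
  rw [← nontrivial_coe_sort, ← one_lt_iff_nontrivial]
  by_contra! h
  exact (le_mk_sdiff_add_mk S U).not_gt
    (add_lt_of_lt hS (h.trans_lt (one_lt_aleph0.trans_le hS)) hU)

theorem Cardinal.exists_mem_gt_of_mk_eq {c : Cardinal.{u}} (hc : ℵ₀ ≤ c) {A : Set c.ord.ToType}
    (hA : #A = c) (z : c.ord.ToType) : ∃ a ∈ A, z < a := by
  have := Cardinal.noMaxOrder hc
  by_contra! hbdd
  obtain ⟨w, hzw⟩ := exists_gt z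
  have hAw : A ⊆ Iio w := fun a ha => (hbdd a ha).trans_lt hzw
  exact ((mk_le_mk_of_subset hAw).trans_lt
    ((mk_Iio_lt w (by simp)).trans_eq (mk_ord_toType c))).ne hA

section Splitting

variable {Y : Type u} {μ : Cardinal.{u}}

theorem exists_bool_splitting_of_wellFoundedLT {J : Type u} [LinearOrder J] [WellFoundedLT J]
    (hμ : ℵ₀ ≤ μ) (hJ : ∀ j : J, #(Iio j) < μ) (F : J → Set Y) (hF : ∀ j, #(F j) = μ) :
    ∃ f : Y → Bool, ∀ j, ∃ a ∈ F j, ∃ b ∈ F j, f a ≠ f b := by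
  classical
  let used {j : J} (g : Iio j → Y × Y) : Set Y := range (Prod.fst ∘ g) ∪ range (Prod.snd ∘ g)
  have hused {j : J} (g : Iio j → Y × Y) : #(used g) < #(F j) := by
    rw [hF j]
    refine (mk_union_le _ _).trans_lt (add_lt_of_lt hμ ?_ ?_) <;>
      exact mk_range_le.trans_lt (hJ j)
  -- Choose, by transfinite recursion, two fresh points of each `F j`; `f` marks the first ones.
  obtain ⟨p, hp⟩ := WellFoundedLT.exists_forall_restrict
    (fun j g (q : Y × Y) => q.1 ∈ F j \ used g ∧ q.2 ∈ F j \ used g ∧ q.1 ≠ q.2)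
    fun j g => by
      obtain ⟨a, ha, b, hb, hab⟩ := nontrivial_diff_of_mk_lt (hF j ▸ hμ) (hused g)
      exact ⟨(a, b), ha, hb, hab⟩
  refine ⟨fun y => decide (y ∈ range (Prod.fst ∘ p)), fun j =>
    ⟨_, (hp j).1.1, _, (hp j).2.1.1, ?_⟩⟩
  have hfst : (p j).1 ∈ range (Prod.fst ∘ p) := ⟨j, rfl⟩
  have hsnd : (p j).2 ∉ range (Prod.fst ∘ p) := by
    rintro ⟨k, hk⟩
    rcases lt_trichotomy k j with hkj | rfl | hjk
    · exact (hp j).2.1.2 (Or.inl ⟨⟨k, hkj⟩, hk⟩)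
    · exact (hp k).2.2 hk
    · exact (hp k).1.2 (Or.inr ⟨⟨j, hjk⟩, hk.symm⟩)
  simp [hfst, hsnd]

theorem exists_bool_splitting_of_mk_le {J : Type u} (hμ : ℵ₀ ≤ μ) (hJ : #J ≤ μ)
    (F : J → Set Y) (hF : ∀ j, #(F j) = μ) :
    ∃ f : Y → Bool, ∀ j, ∃ a ∈ F j, ∃ b ∈ F j, f a ≠ f b := by
  obtain ⟨e⟩ : Nonempty (J ≃ (#J).ord.ToType) := Cardinal.eq.1 (mk_ord_toType _).symm
  obtain ⟨f, hf⟩ := exists_bool_splitting_of_wellFoundedLT hμ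
    (fun k => ((mk_Iio_lt k (by simp)).trans_eq (mk_ord_toType _)).trans_le hJ)
    (F ∘ e.symm) fun k => hF _
  exact ⟨f, fun j => by simpa using hf (e j)⟩

end Splitting

theorem exists_bool_coloring_forall_not_homogeneous {Y : Type u} (hY : ℵ₀ ≤ #Y)
    (h2 : 2 ^ #Y ≤ Order.succ #Y) :
    ∃ c : (Order.succ #Y).ord.ToType → Y → Bool, ∀ (A : Set (Order.succ #Y).ord.ToType)
      (B : Set Y), #A = Order.succ #Y → #B = #Y → ∃ a ∈ A, ∃ b ∈ B, ∃ b' ∈ B, c a b ≠ c a b' := by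
  obtain ⟨e⟩ : Nonempty (Set Y ↪ (Order.succ #Y).ord.ToType) := by
    rwa [← le_def, mk_set, mk_ord_toType]
  have hsplit (x : (Order.succ #Y).ord.ToType) : ∃ f : Y → Bool,
      ∀ B : {B : Set Y // #B = #Y ∧ e B < x}, ∃ a ∈ B.1, ∃ b ∈ B.1, f a ≠ f b := by
    refine exists_bool_splitting_of_mk_le hY ?_ _ fun B => B.2.1
    calc #{B : Set Y // #B = #Y ∧ e B < x}
        ≤ #(Iio x) := mk_le_of_injective (f := fun B => ⟨e B, B.2.2⟩)
          fun B B' h => Subtype.ext (e.injective (congrArg Subtype.val h))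
      _ ≤ #Y := Order.lt_succ_iff.1 ((mk_Iio_lt x (by simp)).trans_eq (mk_ord_toType _))
  choose f hf using hsplit
  refine ⟨f, fun A B hA hB => ?_⟩
  obtain ⟨a, ha, hBa⟩ := exists_mem_gt_of_mk_eq (hY.trans (Order.le_succ _)) hA (e B)
  exact ⟨a, ha, hf a ⟨B, hB, hBa⟩⟩

theorem stmt_19_general (μ κ θ : Cardinal) (hcof : μ.ord.cof = κ)
    (hθ2 : 2 ≤ θ) (hθ : θ < κ)
    (hpol : ∀ (X Y T : Type), #X = Order.succ μ → #Y = μ → #T = θ →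
      ∀ c : X → Y → T, ∃ (A : Set X) (B : Set Y),
        #A = Order.succ μ ∧ #B = μ ∧ ∃ i : T, ∀ a ∈ A, ∀ b ∈ B, c a b = i) :
    Order.succ μ < 2 ^ μ := by
  have hμ : ℵ₀ ≤ μ := by
    have hcof1 : 1 < μ.ord.cof := hcof ▸ Cardinal.one_lt_two.trans_le (hθ2.trans hθ.le)
    simpa using (Ordinal.aleph0_le_cof_iff.2 hcof1).trans (Ordinal.cof_le_card μ.ord)
  by_contra! h2
  obtain ⟨φ⟩ : Nonempty (Bool ↪ θ.out) := by rwa [← le_def, mk_bool, mk_out]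
  obtain ⟨c, hc⟩ := exists_bool_coloring_forall_not_homogeneous (Y := μ.out)
    (by rwa [mk_out]) (by rwa [mk_out])
  obtain ⟨A, B, hA, hB, i, hi⟩ :=
    hpol _ μ.out θ.out (by simp) (mk_out μ) (mk_out θ) fun x y => φ (c x y)
  obtain ⟨a, ha, b, hb, b', hb', hne⟩ := hc A B (by rw [hA, mk_out]) (by rw [hB, mk_out])
  exact hne (φ.injective ((hi a ha b hb).trans (hi a ha b' hb').symm))

/-- If `μ` is singular of cofinality `κ`, `2 ≤ θ < κ`, and the strong polarized
    relation `(μ⁺, μ) → (μ⁺, μ)^{1,1}_θ` holds, then `2 ^ μ > μ⁺`. -/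
theorem stmt_19 (μ κ θ : Cardinal) (hcof : μ.ord.cof = κ) (hsing : κ < μ)
    (hθ2 : 2 ≤ θ) (hθ : θ < κ)
    (hpol : ∀ (X Y T : Type), #X = Order.succ μ → #Y = μ → #T = θ →
      ∀ c : X → Y → T, ∃ (A : Set X) (B : Set Y),
        #A = Order.succ μ ∧ #B = μ ∧ ∃ i : T, ∀ a ∈ A, ∀ b ∈ B, c a b = i) :
    Order.succ μ < 2 ^ μ :=
  stmt_19_general μ κ θ hcof hθ2 hθ hpol
end
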